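/- arXiv:2103.09717 — 4 statements merged into one kernel-verified Lean document; each statement's English description precedes it below -/
import Mathlib

section
/- For any real λ with 0 < |λ| < 2ⁿ⁻¹ (λ not a multiple of 2ⁿ), the phase-estimation probability satisfies |β(λ)|² ≥ sin²(πλ)/(π²λ²), where β(λ) := (1/2ⁿ) Σ_{t=0}^{2ⁿ−1} e^{2πi t λ / 2ⁿ}. -/
/-- The amplitude arising from the inverse QFT in textbook phase estimation. -/
noncomputable def pePsi (n : ℕ) (lam : ℝ) : ℂ :=
  (1 / 2 ^ n : ℂ) * ∑ t ∈ Finset.range (2 ^ n),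
    Complex.exp (2 * Real.pi * Complex.I * t * lam / 2 ^ n)

/-!
Multiplying the geometric sum `∑_{t<N} w^t`, `w = e^{ix}`, by `w - 1` gives the Dirichlet-kernel
identity `‖∑_{t<N} w^t‖ · |sin (x/2)| = |sin (N x/2)|`. Since `|sin (x/2)| ≤ |x/2|`, this yields
`|sin (N x/2)| ≤ ‖(1/N) ∑_{t<N} w^t‖ · |N x/2|`, which for `N = 2ⁿ`, `x = 2πλ/2ⁿ` is the claim
after squaring.
-/

open Complex Finset

theorem norm_geom_sum_exp_mul_abs_sin (N : ℕ) (x : ℝ) :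
    ‖∑ t ∈ range N, exp (I * x) ^ t‖ * |Real.sin (x / 2)| = |Real.sin (N * x / 2)| := by
  have hpow : exp (I * x) ^ N = exp (I * ((N * x : ℝ) : ℂ)) := by
    rw [← exp_nat_mul]; push_cast; ring_nf
  have h := congrArg (‖·‖) (geom_sum_mul (exp (I * x)) N)
  simp only [norm_mul, hpow, norm_exp_I_mul_ofReal_sub_one, Real.norm_eq_abs,
    abs_two] at h
  linarith

theorem sq_sin_div_sq_le_norm_sq_geom_sum_exp (N : ℕ) (x : ℝ) :
    Real.sin (N * x / 2) ^ 2 / (N * x / 2) ^ 2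
      ≤ ‖(N : ℂ)⁻¹ * ∑ t ∈ range N, exp (I * x) ^ t‖ ^ 2 := by
  rcases N.eq_zero_or_pos with rfl | hN
  · simp
  have hNx : |N * x / 2| = N * |x / 2| := by
    rw [mul_div_assoc, abs_mul, Nat.abs_cast]
  have hnorm : ‖(N : ℂ)⁻¹ * ∑ t ∈ range N, exp (I * x) ^ t‖ * N
      = ‖∑ t ∈ range N, exp (I * x) ^ t‖ := by
    rw [norm_mul, norm_inv, Complex.norm_natCast, mul_comm, ← mul_assoc,
      mul_inv_cancel₀ (by positivity), one_mul]
  refine div_le_of_le_mul₀ (by positivity) (by positivity) ?_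
  rw [← sq_abs, ← sq_abs (N * x / 2), ← mul_pow]
  gcongr
  calc |Real.sin (N * x / 2)|
      = ‖∑ t ∈ range N, exp (I * x) ^ t‖ * |Real.sin (x / 2)| :=
        (norm_geom_sum_exp_mul_abs_sin N x).symm
    _ ≤ ‖∑ t ∈ range N, exp (I * x) ^ t‖ * |x / 2| :=
        mul_le_mul_of_nonneg_left Real.abs_sin_le_abs (norm_nonneg _)
    _ = _ := by rw [hNx, ← hnorm]; ring

theorem pePsi_eq_geom_sum (n : ℕ) (lam : ℝ) :
    pePsi n lam = ((2 ^ n : ℕ) : ℂ)⁻¹ *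
      ∑ t ∈ range (2 ^ n), exp (I * ((2 * Real.pi * lam / 2 ^ n : ℝ) : ℂ)) ^ t := by
  rw [pePsi, one_div, Nat.cast_pow, Nat.cast_ofNat]
  congr 1
  refine sum_congr rfl fun t _ => ?_
  rw [← exp_nat_mul]
  push_cast
  ring_nf

theorem abs_sq_pePsi_ge_general (n : ℕ) (lam : ℝ) :
    Real.sin (Real.pi * lam) ^ 2 / (Real.pi ^ 2 * lam ^ 2)
      ≤ ‖pePsi n lam‖ ^ 2 := by
  have h := sq_sin_div_sq_le_norm_sq_geom_sum_exp (2 ^ n) (2 * Real.pi * lam / 2 ^ n)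
  have hθ : ((2 ^ n : ℕ) : ℝ) * (2 * Real.pi * lam / 2 ^ n) / 2 = Real.pi * lam := by
    push_cast; field_simp
  rwa [← pePsi_eq_geom_sum, hθ, mul_pow] at h

/-- For `0 < |λ| < 2ⁿ⁻¹`, the phase-estimation probability satisfies
`|β(λ)|² ≥ sin²(πλ)/(π²λ²)`. -/
theorem abs_sq_pePsi_ge (n : ℕ) (hn : 0 < n) (lam : ℝ)
    (h0 : 0 < |lam|) (h1 : |lam| < 2 ^ (n - 1)) :
    Real.sin (Real.pi * lam) ^ 2 / (Real.pi ^ 2 * lam ^ 2)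
      ≤ ‖pePsi n lam‖ ^ 2 :=
  abs_sq_pePsi_ge_general n lam
end

section
/- The function γ(x) := sin²(πx)/(π²x²) satisfies γ(x) + γ(x−1) ≥ 8/π² for all x ∈ (0,1). -/
open Real

private lemma polyB (a u : ℝ) (ha : 9.8695 ≤ a) (ha' : a ≤ 9.8697) (hu : 0 ≤ u) (hu' : u ≤ 1/16) :
    8 * (1/4 - u)^2 ≤ (1 - a*u/2 - 5*a^2*u^2/96)^2 * (1/2 + 2*u) := by
  have h16 : 0 ≤ 1/16 - u := by linarith
  have hA : 0 ≤ a - 9.8695 := by linarith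
  have hA' : 0 ≤ 9.8697 - a := by linarith
  nlinarith [mul_nonneg hu hu, mul_nonneg (mul_nonneg hu hu) hu,
    mul_nonneg h16 hu, mul_nonneg (mul_nonneg h16 hu) hu,
    mul_nonneg (mul_nonneg (mul_nonneg h16 hu) hu) hu,
    mul_nonneg hA' hu, mul_nonneg (mul_nonneg hA' hu) hu,
    mul_nonneg hA hu, mul_nonneg (mul_nonneg hA hu) hu,
    mul_nonneg (mul_nonneg hA hu) (mul_nonneg hu hu),
    mul_nonneg (mul_nonneg hA' hu) (mul_nonneg hu hu),
    mul_nonneg (mul_nonneg (mul_nonneg hu hu) hu) hu,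
    sq_nonneg (a*u - 1/2), mul_nonneg (mul_nonneg hA hA') (mul_nonneg hu hu)]

private lemma cosB (t : ℝ) (ht0 : 0 ≤ t) (ht4 : t ≤ 1/4) :
    8 * (1/4 - t^2)^2 ≤ Real.cos (Real.pi * t) ^ 2 * (1/2 + 2*t^2) := by
  have hy : (0:ℝ) ≤ π * t := by positivity
  have hy1 : π * t ≤ 1 := by
    nlinarith [pi_le_four, mul_nonneg (by linarith [pi_le_four] : (0:ℝ) ≤ 4 - π) ht0]
  have habs : |π * t| ≤ 1 := by rwa [abs_of_nonneg hy]
  have hcb := abs_le.1 (Real.cos_bound habs)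
  have h4 : |π*t|^4 = (π*t)^4 := by rw [abs_of_nonneg hy]
  have hC : 1 - (π*t)^2/2 - (π*t)^4 * (5/96) ≤ Real.cos (π * t) := by
    have := hcb.1
    rw [h4] at this
    linarith
  have hCnn : 0 ≤ 1 - (π*t)^2/2 - (π*t)^4 * (5/96) := by
    nlinarith [mul_nonneg hy hy, mul_nonneg (sub_nonneg.2 hy1) hy,
      mul_nonneg (mul_nonneg (sub_nonneg.2 hy1) hy) (mul_nonneg hy hy),
      mul_nonneg (mul_nonneg hy hy) (mul_nonneg hy hy)]
  have hsq : (1 - (π*t)^2/2 - (π*t)^4 * (5/96))^2 ≤ Real.cos (π * t) ^ 2 :=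
    pow_le_pow_left₀ hCnn hC 2
  have ha : (9.8695:ℝ) ≤ π^2 := by nlinarith [pi_gt_d6]
  have ha' : π^2 ≤ 9.8697 := by nlinarith [pi_lt_d6, pi_pos]
  have hu : (0:ℝ) ≤ t^2 := sq_nonneg t
  have hu' : t^2 ≤ 1/16 := by nlinarith
  have hp := polyB (π^2) (t^2) ha ha' hu hu'
  have e3 : 1 - π^2*(t^2)/2 - 5*(π^2)^2*(t^2)^2/96 = 1 - (π*t)^2/2 - (π*t)^4 * (5/96) := by
    ring
  rw [e3] at hp
  calc 8 * (1/4 - t^2)^2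
      ≤ (1 - (π*t)^2/2 - (π*t)^4 * (5/96))^2 * (1/2 + 2*t^2) := hp
    _ ≤ Real.cos (π * t) ^ 2 * (1/2 + 2*t^2) :=
        mul_le_mul_of_nonneg_right hsq (by nlinarith)

/-- Key inequality for `x ∈ (0, 1/2]`. -/
private lemma key_half (x : ℝ) (h0 : 0 < x) (h2 : x ≤ 1/2) :
    8 * (x^2 * (1-x)^2) ≤ Real.sin (Real.pi * x) ^ 2 * (x^2 + (1-x)^2) := by
  rcases le_or_gt x (1/4) with h4 | h4
  · -- use concavity of sin on [0, π]: sin (π x) ≥ 2√2 x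
    have hconc := strictConcaveOn_sin_Icc.concaveOn
    have hmem0 : (0:ℝ) ∈ Set.Icc (0:ℝ) π := ⟨le_rfl, pi_pos.le⟩
    have hmem1 : π/4 ∈ Set.Icc (0:ℝ) π := ⟨by positivity, by linarith [pi_pos]⟩
    have ha : (0:ℝ) ≤ 1 - 4*x := by linarith
    have hb : (0:ℝ) ≤ 4*x := by linarith
    have hab : (1 - 4*x) + 4*x = 1 := by ring
    have hcv := hconc.2 hmem0 hmem1 ha hb hab
    have hcomb : (1-4*x) • (0:ℝ) + (4*x) • (π/4) = π * x := by
      simp only [smul_eq_mul]; ring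
    rw [hcomb] at hcv
    have hsin : Real.sqrt 2 * (2*x) ≤ Real.sin (π * x) := by
      rw [Real.sin_pi_div_four] at hcv
      simp only [smul_eq_mul, Real.sin_zero, mul_zero, zero_add] at hcv
      nlinarith [hcv]
    have hsq : 8 * x^2 ≤ Real.sin (π * x) ^ 2 := by
      have h2' : Real.sqrt 2 ^ 2 = 2 := Real.sq_sqrt (by norm_num)
      have hpos : 0 ≤ Real.sqrt 2 * (2*x) := by positivity
      nlinarith [hsin, hpos]
    nlinarith [hsq, sq_nonneg x, sq_nonneg (1-x), mul_nonneg (sq_nonneg x) (sq_nonneg x)]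
  · -- middle region: x ∈ [1/4, 1/2]
    have hsin_eq : Real.sin (π * x) = Real.cos (π * (1/2 - x)) := by
      rw [← Real.sin_pi_div_two_sub]
      congr 1
      ring
    have e1 : x^2 * (1-x)^2 = (1/4 - (1/2-x)^2)^2 := by ring
    have e2 : x^2 + (1-x)^2 = 1/2 + 2*(1/2-x)^2 := by ring
    rw [hsin_eq, e1, e2]
    exact cosB (1/2 - x) (by linarith) (by linarith)

/-- Key inequality for all `x ∈ (0,1)`. -/
private lemma key (x : ℝ) (h0 : 0 < x) (h1 : x < 1) :
    8 * (x^2 * (1-x)^2) ≤ Real.sin (Real.pi * x) ^ 2 * (x^2 + (1-x)^2) := by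
  rcases le_or_gt x (1/2) with h | h
  · exact key_half x h0 h
  · have hk := key_half (1-x) (by linarith) (by linarith)
    have hsin : Real.sin (π * (1-x)) = Real.sin (π * x) := by
      rw [show π * (1-x) = π - π * x by ring, Real.sin_pi_sub]
    rw [hsin] at hk
    calc 8 * (x^2 * (1-x)^2) = 8 * ((1-x)^2 * (1-(1-x))^2) := by ring
      _ ≤ Real.sin (π * x)^2 * ((1-x)^2 + (1-(1-x))^2) := hk
      _ = Real.sin (π * x)^2 * (x^2 + (1-x)^2) := by ring

/-- The lower bound `γ(x) = sin²(πx)/(π²x²)` on the probability of a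
phase-estimation outcome. -/
noncomputable def peGamma (x : ℝ) : ℝ :=
  Real.sin (Real.pi * x) ^ 2 / (Real.pi ^ 2 * x ^ 2)

/-- The total probability of two adjacent bins is at least `8/π²`:
`γ(x) + γ(x−1) ≥ 8/π²` for all `x ∈ (0,1)`. -/
theorem peGamma_add_peGamma_sub_one_ge (x : ℝ) (hx : x ∈ Set.Ioo (0 : ℝ) 1) :
    8 / Real.pi ^ 2 ≤ peGamma x + peGamma (x - 1) := by
  obtain ⟨h0, h1⟩ := hx
  have hk := key x h0 h1
  have hπ : (0:ℝ) < π := pi_pos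
  have hsin : Real.sin (π * (x-1)) ^ 2 = Real.sin (π * x) ^ 2 := by
    rw [show π * (x-1) = π * x - π by ring, Real.sin_sub_pi]
    ring
  unfold peGamma
  rw [hsin]
  have hx2 : (0:ℝ) < π^2 * x^2 := by positivity
  have hx1 : (0:ℝ) < π^2 * (x-1)^2 := by
    have hne : x - 1 ≠ 0 := by intro h; nlinarith [h]
    positivity
  rw [div_add_div _ _ (ne_of_gt hx2) (ne_of_gt hx1),
    div_le_div_iff₀ (by positivity) (by positivity)]
  nlinarith [mul_le_mul_of_nonneg_left hk (le_of_lt (by positivity : (0:ℝ) < π^4))]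
end

section
/- Let U_A be a unitary on ℂ^{2^m} ⊗ H that block-encodes A, i.e. A = (⟨0^m| ⊗ I) U_A (|0^m⟩ ⊗ I), and suppose ‖A − V‖ ≤ ε for some unitary V on H. Define the channel Λ(ρ) := Σ_i (⟨i| ⊗ I) U_A (|0^m⟩⟨0^m| ⊗ ρ) U_A† (|i⟩ ⊗ I). Then for every density matrix ρ (and with an identity channel tensored on an auxiliary system), ‖(Λ ⊗ I)(σ) − ((V·V†) ⊗ I)(σ)‖₁ ≤ 4ε for all density matrices σ, i.e. ‖Λ − V·V†‖_⋄ ≤ 4ε. -/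
open scoped Matrix
open scoped Matrix.Norms.L2Operator
open scoped Kronecker
open scoped ComplexOrder

/-- The trace norm of a complex square matrix (sum of singular values). -/
noncomputable def traceNorm {ι : Type*} [Fintype ι] [DecidableEq ι] (M : Matrix ι ι ℂ) : ℝ :=
  ∑ i, Real.sqrt ((Matrix.isHermitian_mul_conjTranspose_self Mᴴ).eigenvalues i)

/-!
Tensoring with an identity is a star-algebra homomorphism, hence contractive, so it suffices to
compare a channel with Kraus operators `K a` (`∑ₐ (K a)ᴴ K a = 1`) and conjugation by a unitary
`W`, where `‖A - W‖ ≤ ε` for `A = K a₀`. With `E = A - W`, the difference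
`D = ∑ₐ K a σ (K a)ᴴ - W σ Wᴴ` splits as `S + E σ Aᴴ + W σ Eᴴ`, where
`S = ∑_{a ≠ a₀} K a σ (K a)ᴴ` is positive. Trace preservation gives
`tr S = tr ((Wᴴ W - Aᴴ A) σ) = -tr ((Wᴴ E + Eᴴ A) σ) ≤ 2ε`, and each cross term contributes at
most `ε` because `A` and `W` are contractions. These bounds add up once `‖D‖₁` is written as
`re tr (C D)` with the contraction `C = sign D`.
-/

open scoped MatrixOrder

lemma norm_le_one_of_star_mul_self_le_one {A : Type*} [CStarAlgebra A] [PartialOrder A]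
    [StarOrderedRing A] {a : A} (h : star a * a ≤ 1) : ‖a‖ ≤ 1 := by
  have := (CStarAlgebra.norm_le_one_iff_of_nonneg (star a * a)).mpr h
  rw [CStarRing.norm_star_mul_self] at this
  nlinarith [norm_nonneg a]

namespace Matrix

section kronecker

variable (R : Type*) [CommSemiring R] [StarRing R] (n κ : Type*) [Fintype n] [DecidableEq n]
  [Fintype κ] [DecidableEq κ]

def kroneckerOneStarAlgHom : Matrix n n R →⋆ₐ[R] Matrix (n × κ) (n × κ) R where
  toFun M := M ⊗ₖ 1
  map_one' := one_kronecker_one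
  map_mul' M N := by rw [← mul_kronecker_mul, one_mul]
  map_zero' := zero_kronecker _
  map_add' M N := add_kronecker M N 1
  commutes' r := by simp [algebraMap_eq_diagonal, ← diagonal_one, diagonal_kronecker_diagonal]
  map_star' M := by simp [star_eq_conjTranspose, conjTranspose_kronecker]

end kronecker

variable {n : Type*} [Fintype n] [DecidableEq n]

lemma sum_conjTranspose_mul_submatrix_eq_one {R α : Type*} [CommRing R] [StarRing R]
    [Fintype α] [DecidableEq α] {U : Matrix (α × n) (α × n) R}
    (hU : U ∈ unitaryGroup (α × n) R) (a₀ : α) :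
    ∑ a, (U.submatrix (Prod.mk a) (Prod.mk a₀))ᴴ * U.submatrix (Prod.mk a) (Prod.mk a₀) = 1 := by
  ext i j
  have h := congr_fun₂ (mem_unitaryGroup_iff'.mp hU) (a₀, i) (a₀, j)
  simpa [mul_apply, sum_apply, Fintype.sum_prod_type, one_apply] using h

lemma trace_mul_mul_conjTranspose_eq_sum_inner {𝕜 m : Type*} [RCLike 𝕜] [Fintype m]
    (M : Matrix n n 𝕜) (Y : Matrix n m 𝕜) :
    (M * (Y * Yᴴ)).trace =
      ∑ j, inner 𝕜 (WithLp.toLp 2 (Yᵀ j))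
        (toEuclideanCLM (n := n) (𝕜 := 𝕜) M (WithLp.toLp 2 (Yᵀ j))) := by
  rw [← Matrix.mul_assoc, trace_mul_cycle]
  simp only [trace, diag, mul_apply, toEuclideanCLM_toLp, EuclideanSpace.inner_toLp_toLp,
    dotProduct, mulVec, conjTranspose_apply, transpose_apply, Pi.star_apply, Finset.sum_mul]
  refine Finset.sum_congr rfl fun j _ => ?_
  rw [Finset.sum_comm]
  exact Finset.sum_congr rfl fun k _ => Finset.sum_congr rfl fun l _ => by ring

lemma PosSemidef.re_trace_mul_le {σ M : Matrix n n ℂ} {c : ℝ} (hσ : σ.PosSemidef) (hM : ‖M‖ ≤ c) :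
    (M * σ).trace.re ≤ c * σ.trace.re := by
  obtain ⟨Y, rfl⟩ := CStarAlgebra.nonneg_iff_eq_mul_star_self.mp hσ.nonneg
  rw [star_eq_conjTranspose, trace_mul_mul_conjTranspose_eq_sum_inner, ← Matrix.one_mul (Y * Yᴴ),
    trace_mul_mul_conjTranspose_eq_sum_inner]
  simp only [map_one, one_apply_eq_self, Complex.re_sum, Finset.mul_sum]
  refine Finset.sum_le_sum fun j _ => ?_
  set y : EuclideanSpace ℂ n := WithLp.toLp 2 (Yᵀ j)
  have hMy : ‖toEuclideanCLM (n := n) (𝕜 := ℂ) M y‖ ≤ c * ‖y‖ :=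
    ((toEuclideanCLM (n := n) (𝕜 := ℂ) M).le_opNorm y).trans (by gcongr; exact hM)
  calc (inner ℂ y (toEuclideanCLM (n := n) (𝕜 := ℂ) M y)).re
      ≤ ‖y‖ * ‖toEuclideanCLM (n := n) (𝕜 := ℂ) M y‖ := by
        rw [← RCLike.re_to_complex]; exact re_inner_le_norm _ _
    _ ≤ ‖y‖ * (c * ‖y‖) := by gcongr
    _ = c * (inner ℂ y y).re := by rw [← RCLike.re_to_complex, inner_self_eq_norm_sq]; ring

lemma IsHermitian.trace_cfc {𝕜 : Type*} [RCLike 𝕜] {H : Matrix n n 𝕜} (hH : H.IsHermitian)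
    (f : ℝ → ℝ) : (cfc f H).trace = ∑ i, (f (hH.eigenvalues i) : 𝕜) := by
  rw [hH.cfc_eq, IsHermitian.cfc, Unitary.conjStarAlgAut_apply, trace_mul_cycle,
    Unitary.coe_star_mul_self, Matrix.one_mul, trace_diagonal]
  rfl

end Matrix

section traceNorm

variable {n : Type*} [Fintype n] [DecidableEq n]

lemma traceNorm_eq_re_trace_abs (M : Matrix n n ℂ) : traceNorm M = (CFC.abs M).trace.re := by
  have hP := Matrix.posSemidef_self_mul_conjTranspose Mᴴ
  have hM : CFC.abs M = CFC.sqrt (Mᴴ * Mᴴᴴ) := by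
    rw [Matrix.conjTranspose_conjTranspose]; rfl
  rw [hM, CFC.sqrt_eq_real_sqrt _ hP.nonneg, cfcₙ_eq_cfc, hP.1.trace_cfc, traceNorm]
  simp

lemma Matrix.IsHermitian.exists_norm_le_one_and_traceNorm_eq {D : Matrix n n ℂ}
    (hD : D.IsHermitian) : ∃ C : Matrix n n ℂ, ‖C‖ ≤ 1 ∧ traceNorm D = (C * D).trace.re := by
  have hcont (f : ℝ → ℝ) : ContinuousOn f (spectrum ℝ D) := D.finite_real_spectrum.continuousOn f
  refine ⟨cfc (fun x : ℝ => (SignType.sign x : ℝ)) D, ?_, ?_⟩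
  · refine norm_cfc_le zero_le_one fun x _ => ?_
    rcases lt_trichotomy x 0 with h | h | h <;> simp [h]
  · rw [traceNorm_eq_re_trace_abs, CFC.abs_eq_cfc_norm D hD.isSelfAdjoint]
    conv_rhs => enter [1, 1, 2]; rw [← cfc_id' ℝ D]
    rw [← cfc_mul _ _ D (hcont _) (hcont _)]
    simp only [Real.norm_eq_abs, sign_mul_self]

end traceNorm

section kraus

variable {R n α : Type*} [Fintype n] [Fintype α]

def krausMap [CommSemiring R] [StarRing R] (K : α → Matrix n n R) (σ : Matrix n n R) :
    Matrix n n R :=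
  ∑ a, K a * σ * (K a)ᴴ

variable [DecidableEq n]

lemma trace_krausMap [CommSemiring R] [StarRing R] {K : α → Matrix n n R}
    (hK : ∑ a, (K a)ᴴ * K a = 1) (σ : Matrix n n R) : (krausMap K σ).trace = σ.trace := by
  calc (krausMap K σ).trace = ∑ a, ((K a)ᴴ * K a * σ).trace := by
        rw [krausMap, Matrix.trace_sum]
        exact Finset.sum_congr rfl fun a _ => Matrix.trace_mul_cycle _ _ _
    _ = σ.trace := by rw [← Matrix.trace_sum, ← Finset.sum_mul, hK, Matrix.one_mul]

lemma norm_le_one_of_sum_conjTranspose_mul_eq_one {K : α → Matrix n n ℂ}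
    (hK : ∑ a, (K a)ᴴ * K a = 1) (a₀ : α) : ‖K a₀‖ ≤ 1 :=
  norm_le_one_of_star_mul_self_le_one <| hK ▸ Finset.single_le_sum
    (f := fun a => (K a)ᴴ * K a) (fun a _ => star_mul_self_nonneg (K a)) (Finset.mem_univ a₀)

variable [DecidableEq α] {K : α → Matrix n n ℂ} (hK : ∑ a, (K a)ᴴ * K a = 1)
  {W : Matrix n n ℂ} (hW : Wᴴ * W = 1) {a₀ : α} {ε : ℝ} (hε : ‖K a₀ - W‖ ≤ ε)
  {σ : Matrix n n ℂ} (hσ : σ.PosSemidef)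
include hK hW hε hσ

lemma re_trace_sum_erase_le :
    (∑ a ∈ Finset.univ.erase a₀, K a * σ * (K a)ᴴ).trace.re ≤ 2 * ε * σ.trace.re := by
  set A := K a₀
  set E := A - W
  have hWE : -(Wᴴ * E) - Eᴴ * A = 1 - Aᴴ * A := by
    simp only [E, Matrix.conjTranspose_sub, Matrix.mul_sub, Matrix.sub_mul, hW]; abel
  have htr : (∑ a ∈ Finset.univ.erase a₀, K a * σ * (K a)ᴴ).trace
      = ((-(Wᴴ * E) - Eᴴ * A) * σ).trace := by
    rw [hWE, Matrix.sub_mul, Matrix.one_mul, Matrix.trace_sub, ← trace_krausMap hK σ, krausMap,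
      ← Finset.add_sum_erase _ _ (Finset.mem_univ a₀), Matrix.trace_add,
      Matrix.trace_mul_cycle A σ]
    ring
  rw [htr, two_mul]
  refine hσ.re_trace_mul_le ((norm_sub_le _ _).trans ?_)
  rw [norm_neg]
  have hA := norm_le_one_of_sum_conjTranspose_mul_eq_one hK a₀
  have hWH : ‖Wᴴ‖ ≤ 1 := by
    rw [Matrix.l2_opNorm_conjTranspose]; exact norm_le_one_of_star_mul_self_le_one hW.le
  have hEH : ‖Eᴴ‖ ≤ ε := by rwa [Matrix.l2_opNorm_conjTranspose]
  simpa using add_le_add (norm_mul_le_of_le hWH hε) (norm_mul_le_of_le hEH hA)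

lemma traceNorm_krausMap_sub_conj_le :
    traceNorm (krausMap K σ - W * σ * Wᴴ) ≤ 4 * ε * σ.trace.re := by
  set A := K a₀
  set E := A - W
  set S := ∑ a ∈ Finset.univ.erase a₀, K a * σ * (K a)ᴴ
  have hSpos : S.PosSemidef :=
    Matrix.posSemidef_sum _ fun a _ => hσ.mul_mul_conjTranspose_same (K a)
  have hdecomp : krausMap K σ - W * σ * Wᴴ = S + E * σ * Aᴴ + W * σ * Eᴴ := by
    rw [krausMap, ← Finset.add_sum_erase _ _ (Finset.mem_univ a₀)]
    simp only [E, Matrix.conjTranspose_sub, Matrix.sub_mul, Matrix.mul_sub]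
    abel
  have hD : (krausMap K σ - W * σ * Wᴴ).IsHermitian :=
    (Matrix.posSemidef_sum _ fun a _ => hσ.mul_mul_conjTranspose_same (K a)).1.sub
      (hσ.mul_mul_conjTranspose_same W).1
  obtain ⟨C, hC, hCD⟩ := hD.exists_norm_le_one_and_traceNorm_eq
  have hcyc (X Y : Matrix n n ℂ) : (C * (X * σ * Y)).trace = (Y * C * X * σ).trace := by
    rw [show Y * C * X * σ = Y * (C * X * σ) by simp only [Matrix.mul_assoc],
      Matrix.trace_mul_comm Y]
    simp only [Matrix.mul_assoc]
  have hA := norm_le_one_of_sum_conjTranspose_mul_eq_one hK a₀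
  have hW1 : ‖W‖ ≤ 1 := norm_le_one_of_star_mul_self_le_one hW.le
  have hAH : ‖Aᴴ‖ ≤ 1 := by rwa [Matrix.l2_opNorm_conjTranspose]
  have hEH : ‖Eᴴ‖ ≤ ε := by rwa [Matrix.l2_opNorm_conjTranspose]
  have hS : (C * S).trace.re ≤ 2 * ε * σ.trace.re :=
    (hSpos.re_trace_mul_le hC).trans (by rw [one_mul]; exact re_trace_sum_erase_le hK hW hε hσ)
  have hEσA : (C * (E * σ * Aᴴ)).trace.re ≤ 1 * 1 * ε * σ.trace.re := by
    rw [hcyc]; exact hσ.re_trace_mul_le (norm_mul_le_of_le (norm_mul_le_of_le hAH hC) hε)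
  have hWσE : (C * (W * σ * Eᴴ)).trace.re ≤ ε * 1 * 1 * σ.trace.re := by
    rw [hcyc]; exact hσ.re_trace_mul_le (norm_mul_le_of_le (norm_mul_le_of_le hEH hC) hW1)
  rw [hCD, hdecomp, Matrix.mul_add, Matrix.mul_add, Matrix.trace_add, Matrix.trace_add,
    Complex.add_re, Complex.add_re]
  linarith

end kraus

/-- If a unitary `U_A` block-encodes `A` (in the ancilla block labelled `a₀`) and
`‖A − V‖ ≤ ε` for a unitary `V`, then the channel obtained by initializing the ancillae
to `a₀`, applying `U_A` and tracing out the ancillae — whose Kraus operators are the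
blocks `B a := (⟨a|⊗I) U_A (|a₀⟩⊗I)` — is `4ε`-close in diamond norm to conjugation
by `V`: tensored with an identity, its output on any density matrix `σ` is within
`4ε` in trace norm of `(V⊗1)σ(V⊗1)†`. -/
theorem blockEncoding_channel_close {ι κ α : Type*}
    [Fintype ι] [DecidableEq ι] [Fintype κ] [DecidableEq κ]
    [Fintype α] [DecidableEq α] (a₀ : α)
    (U_A : Matrix (α × ι) (α × ι) ℂ) (hU : U_A ∈ Matrix.unitaryGroup (α × ι) ℂ)
    (V : Matrix ι ι ℂ) (hV : V ∈ Matrix.unitaryGroup ι ℂ)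
    (ε : ℝ)
    (A : Matrix ι ι ℂ) (hA : A = fun i j => U_A (a₀, i) (a₀, j))
    (hAV : ‖A - V‖ ≤ ε)
    (B : α → Matrix ι ι ℂ) (hB : ∀ a, B a = fun i j => U_A (a, i) (a₀, j))
    (σ : Matrix (ι × κ) (ι × κ) ℂ) (hσ : σ.PosSemidef) (hσtr : σ.trace = 1) :
    traceNorm ((∑ a : α, (B a ⊗ₖ (1 : Matrix κ κ ℂ)) * σ * (B a ⊗ₖ (1 : Matrix κ κ ℂ))ᴴ)
        - (V ⊗ₖ (1 : Matrix κ κ ℂ)) * σ * (V ⊗ₖ (1 : Matrix κ κ ℂ))ᴴ)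
      ≤ 4 * ε := by
  set φ := Matrix.kroneckerOneStarAlgHom ℂ ι κ
  have hB' : B = fun a => U_A.submatrix (Prod.mk a) (Prod.mk a₀) := funext hB
  have hK : ∑ a, (φ (B a))ᴴ * φ (B a) = 1 := by
    calc ∑ a, (φ (B a))ᴴ * φ (B a) = φ (∑ a, (B a)ᴴ * B a) := by
          simp only [map_sum, map_mul, ← Matrix.star_eq_conjTranspose, map_star]
      _ = 1 := by
          rw [hB', Matrix.sum_conjTranspose_mul_submatrix_eq_one hU a₀, map_one]
  have hW : (φ V)ᴴ * φ V = 1 := by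
    rw [← Matrix.star_eq_conjTranspose, ← map_star, ← map_mul,
      Matrix.mem_unitaryGroup_iff'.mp hV, map_one]
  have hε : ‖φ (B a₀) - φ V‖ ≤ ε := by
    rw [← map_sub, hB a₀, ← hA]
    exact (NonUnitalStarAlgHom.norm_apply_le φ _).trans hAV
  have := traceNorm_krausMap_sub_conj_le hK hW hε hσ
  rwa [hσtr, Complex.one_re, mul_one] at this
end

section
/- Let U_A be a block-encoding of a Hermitian A with m ancillae, and define V_A := (U_A† ⊗ I_out)(CX)(U_A ⊗ I_out) where CX flips the output qubit controlled on the ancilla register being |0^m⟩ (i.e. CX = X ⊗ |0^m⟩⟨0^m| + I ⊗ (I − |0^m⟩⟨0^m|)). Then (I ⊗ ⟨0^m| ⊗ I) V_A (|0⟩ ⊗ |0^m⟩ ⊗ I) = |1⟩ ⊗ A² + |0⟩ ⊗ (I − A²). -/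
/-!
Because `U_A` is unitary, conjugating `CX = X ⊗ P + 1 ⊗ (1 - P)` (with `P = |0^m⟩⟨0^m| ⊗ 1`)
by `1 ⊗ U_A` gives `X ⊗ M + 1 ⊗ (1 - M)` with `M = U_A† P U_A`. The `|0^m⟩` corner of `M` is
`A† A`, which is `A²` as `A` is Hermitian.
-/

open scoped Matrix Kronecker

namespace Matrix

variable {R l m n : Type*}

theorem sub_kronecker [Ring R] (A B : Matrix l m R) (C : Matrix n n R) :
    (A - B) ⊗ₖ C = A ⊗ₖ C - B ⊗ₖ C := by
  ext; simp [sub_mul]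

/-- The gate `G` controlled on the range of the projector `Q`. -/
def controlled [DecidableEq l] [DecidableEq m] [Ring R] (G : Matrix l l R) (Q : Matrix m m R) :
    Matrix (l × m) (l × m) R :=
  G ⊗ₖ Q + 1 ⊗ₖ (1 - Q)

theorem conjTranspose_one_kronecker_mul_controlled_mul [Fintype l] [DecidableEq l] [Fintype m]
    [DecidableEq m] [CommRing R] [StarRing R] (G : Matrix l l R) (Q U : Matrix m m R)
    (hU : Uᴴ * U = 1) :
    ((1 : Matrix l l R) ⊗ₖ U)ᴴ * controlled G Q * (1 ⊗ₖ U) = controlled G (Uᴴ * Q * U) := by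
  rw [controlled, controlled, conjTranspose_kronecker, conjTranspose_one, mul_add, add_mul,
    ← mul_kronecker_mul, ← mul_kronecker_mul, ← mul_kronecker_mul, ← mul_kronecker_mul]
  simp [Matrix.mul_sub, Matrix.sub_mul, hU, Matrix.mul_assoc]

theorem conjTranspose_mul_single_kronecker_one_mul_apply [Fintype l] [DecidableEq l]
    [Fintype m] [DecidableEq m] [CommSemiring R] [StarRing R]
    (U : Matrix (l × m) n R) (a : l) (x y : n) :
    (Uᴴ * (single a a 1 ⊗ₖ (1 : Matrix m m R)) * U : Matrix n n R) x y
      = ∑ k, star (U (a, k) x) * U (a, k) y := by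
  simp [mul_apply, Fintype.sum_prod_type, single_apply, one_apply, ite_and]

end Matrix

open Matrix in
/-- The block-measurement circuit: with `U_A` a block-encoding of Hermitian `A`
(with ancilla state `a₀`), `V_A = (1⊗U_A)† · CX · (1⊗U_A)` where `CX` flips the
output qubit controlled on the ancillae being `a₀`. Postselecting the ancillae on
`a₀` with input ancillae `a₀` and input output-qubit `|0⟩`, `V_A` block-encodes
`|1⟩⊗A² + |0⟩⊗(I−A²)`. -/
theorem blockMeasurement_circuit {ι α : Type*} [Fintype ι] [DecidableEq ι]
    [Fintype α] [DecidableEq α] (a₀ : α)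
    (U_A : Matrix (α × ι) (α × ι) ℂ) (hU : U_A ∈ Matrix.unitaryGroup (α × ι) ℂ)
    (A : Matrix ι ι ℂ) (hA : A = fun i j => U_A (a₀, i) (a₀, j)) (hAH : A.IsHermitian)
    (P0 : Matrix α α ℂ) (hP0 : P0 = Matrix.single a₀ a₀ 1)
    (CX Uext VA : Matrix (Fin 2 × α × ι) (Fin 2 × α × ι) ℂ)
    (hCX : CX = (!![0, 1; 1, 0] : Matrix (Fin 2) (Fin 2) ℂ) ⊗ₖ (P0 ⊗ₖ (1 : Matrix ι ι ℂ))
        + (1 : Matrix (Fin 2) (Fin 2) ℂ) ⊗ₖ (((1 : Matrix α α ℂ) - P0) ⊗ₖ (1 : Matrix ι ι ℂ)))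
    (hUext : Uext = (1 : Matrix (Fin 2) (Fin 2) ℂ) ⊗ₖ U_A)
    (hVA : VA = Uextᴴ * CX * Uext) :
    ∀ (b : Fin 2) (i j : ι),
      VA (b, (a₀, i)) (0, (a₀, j))
        = if b = 1 then (A * A) i j else ((1 : Matrix ι ι ℂ) - A * A) i j := by
  set M : Matrix (α × ι) (α × ι) ℂ := U_Aᴴ * (P0 ⊗ₖ 1) * U_A
  have hCX' : CX = controlled !![0, 1; 1, 0] (P0 ⊗ₖ 1) := by
    rw [hCX, controlled, sub_kronecker, one_kronecker_one]
  have hVA' : VA = controlled !![0, 1; 1, 0] M := by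
    rw [hVA, hUext, hCX',
      conjTranspose_one_kronecker_mul_controlled_mul _ _ _ (mem_unitaryGroup_iff'.mp hU)]
  have hM (i j : ι) : M (a₀, i) (a₀, j) = (A * A) i j :=
    calc M (a₀, i) (a₀, j) = (Aᴴ * A) i j := by
          simp only [M]
          rw [hP0, conjTranspose_mul_single_kronecker_one_mul_apply, mul_apply, hA]; rfl
      _ = (A * A) i j := by rw [hAH.eq]
  intro b i j
  fin_cases b <;> simp [hVA', controlled, hM, one_apply]
end
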